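/- Fix 1 < p ≤ ∞, C > 0, and an operator A : X → Y. Then A fails to satisfy C-ℓ_p upper tree estimates if and only if there exists a normally weakly null collection (x_t)_{t∈D^{<ℕ}} ⊆ B_X such that for every infinite branch t = (v_i)_{i=1}^∞ ∈ D^ℕ there exist n ∈ ℕ and (a_i)_{i=1}^n in the unit ball of ℓ_p^n with ‖A∑_{i=1}^n a_i x_{(v_1,…,v_i)}‖ > C. -/

import Mathlib

open Filter
open scoped Classical ENNReal NNReal

section Combinatorics

variable {D : Type*} [Preorder D]

/-- A subset of a directed set is cofinal if every element has an upper bound in it. -/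
def Cofinal (S : Set D) : Prop := ∀ u : D, ∃ v ∈ S, u ≤ v

/-- A subset is eventual if its complement is not cofinal. -/
def Eventual (S : Set D) : Prop := ¬ Cofinal Sᶜ

/-- Inevitable subsets of the tree of nonempty finite sequences from `D`. -/
def Inevitable (B : Set (List D)) : Prop :=
  Eventual {u : D | [u] ∈ B} ∧
    ∀ t ∈ B, t ≠ [] → Eventual {u : D | t ++ [u] ∈ B}

/-- A set of finite sequences is big if it contains an inevitable subset. -/
def Big (B : Set (List D)) : Prop := ∃ B' : Set (List D), B' ⊆ B ∧ Inevitable B'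

end Combinatorics

/-- The canonical weak neighborhood basis at `0` in `X`: basic weak neighborhoods are
indexed by a finite set of functionals and a positive `ε`. -/
def WNbhd (X : Type*) [NormedAddCommGroup X] [NormedSpace ℝ X] : Type _ :=
  Finset (X →L[ℝ] ℝ) × {ε : ℝ // 0 < ε}

variable {X Y : Type*} [NormedAddCommGroup X] [NormedSpace ℝ X]
  [NormedAddCommGroup Y] [NormedSpace ℝ Y]

/-- The basic weak neighborhood of `0` determined by `u ∈ WNbhd X`. -/
def wset (u : WNbhd X) : Set X := {x | ∀ f ∈ u.1, |f x| < u.2.1}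

/-- `WNbhd X` is directed by reverse inclusion of the associated neighborhoods. -/
instance : Preorder (WNbhd X) :=
  Preorder.lift fun u : WNbhd X => OrderDual.toDual (wset u)

/-- A collection `(x_t)` indexed by the nonempty finite sequences from the weak
neighborhood basis is normally weakly null (and contained in `B_X`) if
`x_t ∈ B_X ∩ u_n` whenever `t = (u_1, …, u_n)`. -/
def NormallyWeaklyNull (x : List (WNbhd X) → X) : Prop :=
  ∀ (t : List (WNbhd X)) (u : WNbhd X), ‖x (t ++ [u])‖ ≤ 1 ∧ x (t ++ [u]) ∈ wset u

/-- Membership of `(a_1, …, a_n)` in the unit ball of `ℓ_p^n` (`ℓ_∞^n` when `p = ∞`). -/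
def pBall (p : ℝ≥0∞) (n : ℕ) (a : ℕ → ℝ) : Prop :=
  if p = ⊤ then ∀ i < n, |a i| ≤ 1
  else ∑ i ∈ Finset.range n, |a i| ^ p.toReal ≤ 1

/-- `A` satisfies `C`-`ℓ_p` upper tree estimates (`C`-`c₀` when `p = ∞`) if for every
normally weakly null collection `(x_t) ⊆ B_X`, the set of `t` such that
`‖A ∑_{i ≤ |t|} a_i x_{t|_i}‖ ≤ C ‖(a_i)‖_{ℓ_p}` for all scalars is big. -/
def SatisfiesUpperTreeEst (A : X →L[ℝ] Y) (p : ℝ≥0∞) (C : ℝ) : Prop :=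
  ∀ x : List (WNbhd X) → X, NormallyWeaklyNull x →
    Big {t : List (WNbhd X) | ∀ a : ℕ → ℝ, pBall p t.length a →
      ‖A (∑ i ∈ Finset.range t.length, a i • x (t.take (i + 1)))‖ ≤ C}

/-- `T_p(A)`: the infimum (in `ℝ≥0∞`, so `∞` if no such constant exists) of the
constants `C > 0` such that `A` satisfies `C`-`ℓ_p` upper tree estimates. -/
noncomputable def upperTreeConst (A : X →L[ℝ] Y) (p : ℝ≥0∞) : ℝ≥0∞ :=
  sInf (ENNReal.ofReal '' {C : ℝ | 0 < C ∧ SatisfiesUpperTreeEst A p C})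

/-!
If `A` fails the estimate, then for some normally weakly null `x` the set of sequences along
which the estimate holds is not big. The positions from which the player answering with smaller
neighbourhoods cannot force the play out of that set would form an inevitable subset of it, so
that player wins from the root. Such a strategy is a pruning `σ` of the tree, and `x ∘ σ` is
normally weakly null and violates the estimate along every branch. Conversely, an inevitable
subset of the good set contains a whole branch.
-/

section Tree

variable {D : Type*} [Preorder D]

theorem Eventual.nonempty {S : Set D} (h : Eventual S) : S.Nonempty := by
  by_contra hS
  exact h fun u => ⟨u, fun hu => hS ⟨u, hu⟩, le_rfl⟩

theorem Inevitable.exists_branch {B : Set (List D)} (hB : Inevitable B) :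
    ∃ v : ℕ → D, ∀ n, (List.ofFn fun j : Fin (n + 1) => v j) ∈ B := by
  obtain ⟨u₀, hu₀⟩ := hB.1.nonempty
  have : Nonempty D := ⟨u₀⟩
  set next : List D → D := fun t => Classical.epsilon fun u => t ++ [u] ∈ B
  set grow : List D → List D := fun t => t ++ [next t]
  have hgrow : ∀ n, grow^[n + 1] [] ∈ B := by
    intro n
    induction n with
    | zero => exact Classical.epsilon_spec (p := fun u => [] ++ [u] ∈ B) ⟨u₀, hu₀⟩
    | succ n ih =>
      rw [Function.iterate_succ_apply']
      exact Classical.epsilon_spec (hB.2 _ ih (by simp [Function.iterate_succ_apply', grow])).nonempty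
  have hofFn : ∀ n, (List.ofFn fun j : Fin n => next (grow^[j] [])) = grow^[n] [] := by
    intro n
    induction n with
    | zero => rfl
    | succ n ih =>
      simp only [List.ofFn_succ_last, Fin.val_castSucc, Fin.val_last, ih,
        Function.iterate_succ_apply' grow]
      rfl
  exact ⟨fun j => next (grow^[j] []), fun n => hofFn (n + 1) ▸ hgrow n⟩

/-- A pruning of `D^{<ℕ}` in the sense of the paper, extended by `σ [] = []`. -/
structure IsPruning (σ : List D → List D) : Prop where
  nil : σ [] = []
  append_singleton : ∀ t u, ∃ v, u ≤ v ∧ σ (t ++ [u]) = σ t ++ [v]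

namespace IsPruning

variable {σ : List D → List D}

theorem length_apply (hσ : IsPruning σ) (t : List D) : (σ t).length = t.length := by
  induction t using List.reverseRecOn with
  | nil => simp [hσ.nil]
  | append_singleton t u ih =>
    obtain ⟨v, -, hv⟩ := hσ.append_singleton t u
    simp [hv, ih]

theorem isPrefix_apply (hσ : IsPruning σ) {s t : List D} (h : s <+: t) : σ s <+: σ t := by
  induction t using List.reverseRecOn with
  | nil => simp_all
  | append_singleton t u ih =>
    obtain ⟨v, -, hv⟩ := hσ.append_singleton t u
    rcases List.prefix_concat_iff.mp h with rfl | h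
    · exact List.prefix_refl _
    · exact hv ▸ (ih h).trans (List.prefix_append _ _)

theorem apply_take (hσ : IsPruning σ) (t : List D) (j : ℕ) :
    σ (t.take j) = (σ t).take j := by
  have h := List.prefix_iff_eq_take.mp (hσ.isPrefix_apply (List.take_prefix j t))
  rwa [hσ.length_apply, List.length_take, ← hσ.length_apply t, ← List.take_eq_take_min] at h

end IsPruning

/-- The second player, having reached position `s`, can force the play out of `B`; the pruning
`σ` records the moves made after `s`. -/
def EscapesFrom (B : Set (List D)) (s : List D) : Prop :=
  ∃ σ : List D → List D, IsPruning σ ∧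
    ∀ v : ℕ → D, ∃ n, s ++ σ (List.ofFn fun j : Fin n => v j) ∉ B

theorem escapesFrom_of_notMem {B : Set (List D)} {s : List D} (hs : s ∉ B) :
    EscapesFrom B s :=
  ⟨id, ⟨rfl, fun _ u => ⟨u, le_rfl, rfl⟩⟩, fun _ => ⟨0, by simpa using hs⟩⟩

theorem escapesFrom_of_cofinal {B : Set (List D)} {s : List D}
    (h : Cofinal {u | EscapesFrom B (s ++ [u])}) : EscapesFrom B s := by
  choose f hf hle using h
  choose σ hσ hesc using hf
  refine ⟨fun t => t.casesOn [] fun u t' => f u :: σ u t', ⟨rfl, fun t u => ?_⟩, fun v => ?_⟩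
  · cases t with
    | nil => exact ⟨f u, hle u, by simp [(hσ u).nil]⟩
    | cons u₀ t' =>
      obtain ⟨w, huw, hw⟩ := (hσ u₀).append_singleton t' u
      exact ⟨w, huw, by simp [hw]⟩
  · obtain ⟨n, hn⟩ := hesc (v 0) fun k => v (k + 1)
    exact ⟨n + 1, by simpa [List.ofFn_succ] using hn⟩

theorem exists_pruning_escaping_of_not_big {B : Set (List D)} (h : ¬ Big B) :
    ∃ σ : List D → List D, IsPruning σ ∧
      ∀ v : ℕ → D, ∃ n, σ (List.ofFn fun j : Fin n => v j) ∉ B := by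
  by_contra hnil
  refine h ⟨{s | ¬ EscapesFrom B s}, fun s hs => ?_, ?_, fun s hs _ => ?_⟩
  · by_contra hsB
    exact hs (escapesFrom_of_notMem hsB)
  · refine fun hcof => hnil ?_
    simpa [EscapesFrom] using
      escapesFrom_of_cofinal (s := []) (by simpa [Set.compl_ofPred] using hcof)
  · exact fun hcof => hs (escapesFrom_of_cofinal (by simpa [Set.compl_ofPred] using hcof))

end Tree

section UpperEstimates

variable {X Y : Type*} [NormedAddCommGroup X] [NormedSpace ℝ X]
  [NormedAddCommGroup Y] [NormedSpace ℝ Y]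

theorem wset_subset_of_le {u v : WNbhd X} (h : u ≤ v) : wset v ⊆ wset u := h

theorem NormallyWeaklyNull.comp_pruning {x : List (WNbhd X) → X} (hx : NormallyWeaklyNull x)
    {σ : List (WNbhd X) → List (WNbhd X)} (hσ : IsPruning σ) : NormallyWeaklyNull (x ∘ σ) := by
  intro t u
  obtain ⟨v, huv, hv⟩ := hσ.append_singleton t u
  simp only [Function.comp_apply, hv]
  exact ⟨(hx _ v).1, wset_subset_of_le huv (hx _ v).2⟩

def upperEstSet (A : X →L[ℝ] Y) (p : ℝ≥0∞) (C : ℝ) (x : List (WNbhd X) → X) :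
    Set (List (WNbhd X)) :=
  {t | ∀ a : ℕ → ℝ, pBall p t.length a →
    ‖A (∑ i ∈ Finset.range t.length, a i • x (t.take (i + 1)))‖ ≤ C}

variable (A : X →L[ℝ] Y) (p : ℝ≥0∞) (C : ℝ) (x : List (WNbhd X) → X)

theorem ofFn_mem_upperEstSet_iff (v : ℕ → WNbhd X) (n : ℕ) :
    (List.ofFn fun j : Fin n => v j) ∈ upperEstSet A p C x ↔
      ∀ a : ℕ → ℝ, pBall p n a →
        ‖A (∑ i ∈ Finset.range n, a i • x (List.ofFn fun j : Fin (i + 1) => v j))‖ ≤ C := by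
  have htake : ∀ i ∈ Finset.range n, (List.ofFn fun j : Fin n => v j).take (i + 1) =
      List.ofFn fun j : Fin (i + 1) => v j := fun i hi => by
    apply List.ext_getElem (by simpa using Finset.mem_range.mp hi)
    intro k _ _
    simp only [List.getElem_take, List.getElem_ofFn]
  simp only [upperEstSet, Set.mem_ofPred_eq, List.length_ofFn]
  refine forall₂_congr fun a _ => ?_
  rw [Finset.sum_congr rfl fun i hi => congrArg (a i • x ·) (htake i hi)]

theorem IsPruning.mem_upperEstSet_comp_iff {σ : List (WNbhd X) → List (WNbhd X)}
    (hσ : IsPruning σ) (t : List (WNbhd X)) :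
    t ∈ upperEstSet A p C (x ∘ σ) ↔ σ t ∈ upperEstSet A p C x := by
  simp [upperEstSet, hσ.length_apply, hσ.apply_take]

end UpperEstimates

theorem not_upperTreeEst_iff_general
    (A : X →L[ℝ] Y) (p : ℝ≥0∞) (C : ℝ) (hC : 0 < C) :
    ¬ SatisfiesUpperTreeEst A p C ↔
      ∃ x : List (WNbhd X) → X, NormallyWeaklyNull x ∧
        ∀ v : ℕ → WNbhd X, ∃ n : ℕ, 0 < n ∧ ∃ a : ℕ → ℝ, pBall p n a ∧
          C < ‖A (∑ i ∈ Finset.range n,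
            a i • x (List.ofFn fun j : Fin (i + 1) => v j))‖ := by
  constructor
  · intro h
    obtain ⟨x, hx, hbig⟩ : ∃ x, NormallyWeaklyNull x ∧ ¬ Big (upperEstSet A p C x) := by
      simp only [SatisfiesUpperTreeEst, not_forall, exists_prop] at h
      exact h
    obtain ⟨σ, hσ, hesc⟩ := exists_pruning_escaping_of_not_big hbig
    refine ⟨x ∘ σ, hx.comp_pruning hσ, fun v => ?_⟩
    obtain ⟨n, hn⟩ := hesc v
    rw [← hσ.mem_upperEstSet_comp_iff, ofFn_mem_upperEstSet_iff] at hn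
    push Not at hn
    obtain ⟨a, ha, hlt⟩ := hn
    refine ⟨n, Nat.pos_of_ne_zero ?_, a, ha, hlt⟩
    rintro rfl
    simp only [Finset.range_zero, Finset.sum_empty, map_zero, norm_zero] at hlt
    exact lt_asymm hC hlt
  · rintro ⟨x, hx, hviol⟩ hsat
    obtain ⟨B, hBgood, hB⟩ := hsat x hx
    obtain ⟨v, hv⟩ := hB.exists_branch
    obtain ⟨n, hn, a, ha, hlt⟩ := hviol v
    obtain ⟨m, rfl⟩ := Nat.exists_eq_add_one_of_ne_zero hn.ne'
    exact hlt.not_ge ((ofFn_mem_upperEstSet_iff A p C x v _).mp (hBgood (hv m)) a ha)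

/-- `A` fails `C`-`ℓ_p` (resp. `C`-`c₀`) upper tree estimates if and only if there is
a normally weakly null collection `(x_t) ⊆ B_X` such that along every infinite branch
`(v_i)` there are `n ∈ ℕ` and scalars `(a_i)_{i=1}^n` in the unit ball of `ℓ_p^n` with
`‖A ∑_{i=1}^n a_i x_{(v_1, …, v_i)}‖ > C`. -/
theorem not_upperTreeEst_iff [CompleteSpace X] [CompleteSpace Y]
    (A : X →L[ℝ] Y) (p : ℝ≥0∞) (hp : 1 < p) (C : ℝ) (hC : 0 < C) :
    ¬ SatisfiesUpperTreeEst A p C ↔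
      ∃ x : List (WNbhd X) → X, NormallyWeaklyNull x ∧
        ∀ v : ℕ → WNbhd X, ∃ n : ℕ, 0 < n ∧ ∃ a : ℕ → ℝ, pBall p n a ∧
          C < ‖A (∑ i ∈ Finset.range n,
            a i • x (List.ofFn fun j : Fin (i + 1) => v j))‖ :=
  not_upperTreeEst_iff_general A p C hC
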